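/- Let −1 < n < 1, write n = −1 + δ with 0 < δ < 2, and let m be a minimizer for f_L(n) that is not constant. Then max_Ω m ≥ 1 − δ − 2√δ·√(1 − δ/2). -/

import Mathlib

open MeasureTheory Filter

noncomputable section

/-- The double-well potential `F(m) = (1/4)(m²-1)²`. -/
def Fpot (m : ℝ) : ℝ := (1/4) * (m^2 - 1)^2

/-- The fundamental domain `[0,L)^d` of the torus of side `L`. -/
def box (d : ℕ) (L : ℝ) : Set (EuclideanSpace ℝ (Fin d)) :=
  {x | ∀ i, x i ∈ Set.Ico (0:ℝ) L}

/-- `L`-periodicity in each coordinate direction. -/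
def PeriodicOn (d : ℕ) (L : ℝ) (m : EuclideanSpace ℝ (Fin d) → ℝ) : Prop :=
  ∀ (x : EuclideanSpace ℝ (Fin d)) (i : Fin d),
    m (x + L • EuclideanSpace.single i (1:ℝ)) = m x

/-- The Cahn--Hilliard free energy functional on the torus. -/
def FE (d : ℕ) (L : ℝ) (m : EuclideanSpace ℝ (Fin d) → ℝ) : ℝ :=
  ∫ x in box d L, ((1/2) * ‖fderiv ℝ m x‖^2 + Fpot (m x))

/-- Admissible order parameter fields with mean `n`. -/
def Adm (d : ℕ) (L n : ℝ) (m : EuclideanSpace ℝ (Fin d) → ℝ) : Prop :=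
  ContDiff ℝ 1 m ∧ PeriodicOn d L m ∧ (1/L^d) * (∫ x in box d L, m x) = n

/-- The minimal free energy `f_L(n)`. -/
def fL (d : ℕ) (L n : ℝ) : ℝ :=
  sInf {e | ∃ m, Adm d L n m ∧ FE d L m = e}

/-- A minimizer for `f_L(n)`. -/
def IsMinimizer (d : ℕ) (L n : ℝ) (m : EuclideanSpace ℝ (Fin d) → ℝ) : Prop :=
  Adm d L n m ∧ FE d L m = fL d L n

/-- `σ_d`, the surface measure of the unit sphere in `ℝ^d`. -/
def sigma_d (d : ℕ) : ℝ :=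
  d * (volume (Metric.ball (0 : EuclideanSpace ℝ (Fin d)) 1)).toReal

/-- The planar surface tension `S = 2^{3/2}/3`. -/
def Sconst : ℝ := (2:ℝ) ^ ((3:ℝ)/2) / 3

/-- The compressibility `χ = 1/2`. -/
def chiConst : ℝ := 1/2

/-- The equimolar radius `r_0`. -/
def r0 (d : ℕ) (L n : ℝ) : ℝ := ((d / (2 * sigma_d d)) * (n+1)) ^ ((1:ℝ)/d) * L

/-- `|Γ_0| = σ_d r_0^{d-1}`. -/
def Gamma0 (d : ℕ) (L n : ℝ) : ℝ := sigma_d d * (r0 d L n)^(d-1)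

/-- `C(n)`. -/
def Cn (d : ℕ) (L n : ℝ) : ℝ :=
  (sigma_d d / (2 * chiConst * Sconst)) * (2/(d:ℝ))^2 * ((r0 d L n)^(d+1) / L^d)

/-- `D(K)`. -/
def Dconst (d : ℕ) (K : ℝ) : ℝ :=
  (2 / (d * chiConst * Sconst)) * (sigma_d d / d) ^ (-(1:ℝ)/d) * (K/2) ^ (((d:ℝ)+1)/d)

/-- `K_star`. -/
def Kstar (d : ℕ) : ℝ :=
  ((d:ℝ)+1) * (sigma_d d / d) ^ ((1:ℝ)/((d:ℝ)+1)) * (chiConst * Sconst / 2) ^ ((d:ℝ)/((d:ℝ)+1))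

/-- Torus distance. -/
def torusDist (d : ℕ) (L : ℝ) (x y : EuclideanSpace ℝ (Fin d)) : ℝ :=
  ⨅ k : Fin d → ℤ, dist x (y + (show EuclideanSpace ℝ (Fin d) from WithLp.toLp 2 (fun i => L * (k i : ℝ))))

open Topology

/-! The tangent line of `F` at `n` (slope `F'(n) = n³ - n`) stays below `F` on
`(-∞, -n - √(2 - 2n²))`, strictly away from `n`, because
`F(s) - F(n) - F'(n)(s - n) = (s - n)² ((s + n)² - (2 - 2n²)) / 4`;
for `n = -1 + δ` the endpoint is `1 - δ - 2√δ √(1 - δ/2)`.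
If `m` stayed below it, integrating over the box and using `∫ (m - n) = 0` would give
`∫ F(m) > L^d F(n) = ℱ(n)`, strictly because `m ≠ n` on an open set meeting the box;
so the constant `n` would have smaller energy than the minimizer `m`. -/

lemma volume_box (d : ℕ) (L : ℝ) : volume (box d L) = ENNReal.ofReal L ^ d := by
  have h := (EuclideanSpace.volume_preserving_symm_measurableEquiv_toLp (Fin d)).measure_preimage
    (s := Set.univ.pi fun _ => Set.Ico 0 L)
    (MeasurableSet.univ_pi fun _ => measurableSet_Ico).nullMeasurableSet
  rw [volume_pi_pi] at h
  simpa [box, Set.preimage, Set.mem_univ_pi, Real.volume_Ico] using h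

lemma measurableSet_box (d : ℕ) (L : ℝ) : MeasurableSet (box d L) := by
  unfold box
  measurability

lemma isBounded_box (d : ℕ) (L : ℝ) : Bornology.IsBounded (box d L) := by
  refine ((isCompact_univ_pi fun _ => isCompact_Icc (a := (0 : ℝ)) (b := L)).image
    (PiLp.continuous_toLp 2 _)).isBounded.subset ?_
  exact fun x hx => ⟨x.ofLp, fun i _ => Set.Ico_subset_Icc_self (hx i), rfl⟩

lemma isOpen_openBox (d : ℕ) (L : ℝ) :
    IsOpen {x : EuclideanSpace ℝ (Fin d) | ∀ i, x i ∈ Set.Ioo 0 L} := by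
  simp only [Set.ofPred_forall]
  exact isOpen_iInter_of_finite fun i => isOpen_Ioo.preimage (by fun_prop)

lemma Continuous.integrableOn_box {d : ℕ} {L : ℝ} {g : EuclideanSpace ℝ (Fin d) → ℝ}
    (hg : Continuous g) : IntegrableOn g (box d L) :=
  (hg.continuousOn.integrableOn_compact (isBounded_box d L).isCompact_closure).mono_set
    subset_closure

lemma setIntegral_box_const (d : ℕ) {L : ℝ} (hL : 0 ≤ L) (c : ℝ) :
    ∫ _ in box d L, c = L ^ d * c := by
  simp [measureReal_def, volume_box, hL]

lemma box_subset_closure_openBox (d : ℕ) (L : ℝ) :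
    box d L ⊆ closure {x : EuclideanSpace ℝ (Fin d) | ∀ i, x i ∈ Set.Ioo 0 L} := by
  intro y hy
  have hshift : Tendsto (fun t : ℝ => y + WithLp.toLp 2 (fun _ : Fin d => t)) (𝓝[>] 0) (𝓝 y) := by
    refine tendsto_nhdsWithin_of_tendsto_nhds ?_
    have hc : Continuous fun t : ℝ => y + WithLp.toLp 2 (fun _ : Fin d => t) := by fun_prop
    simpa [← Pi.zero_def] using hc.tendsto 0
  refine mem_closure_of_tendsto hshift (eventually_all.2 fun i => ?_)
  filter_upwards [self_mem_nhdsWithin, Ioo_mem_nhdsGT (sub_pos.2 (hy i).2)] with t ht hlt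
  exact ⟨by simpa using add_pos_of_nonneg_of_pos (hy i).1 ht,
    by simpa [lt_sub_iff_add_lt'] using hlt.2⟩

lemma setIntegral_box_pos {d : ℕ} {L : ℝ} {g : EuclideanSpace ℝ (Fin d) → ℝ} (hg : Continuous g)
    (hg_nonneg : ∀ x ∈ box d L, 0 ≤ g x) {y : EuclideanSpace ℝ (Fin d)} (hy : y ∈ box d L)
    (hgy : g y ≠ 0) : 0 < ∫ x in box d L, g x := by
  rw [setIntegral_pos_iff_support_of_nonneg_ae
    ((ae_restrict_iff' (measurableSet_box d L)).2 (ae_of_all _ hg_nonneg))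
    hg.integrableOn_box]
  obtain ⟨z, hz_supp, hz_open⟩ := mem_closure_iff.1 (box_subset_closure_openBox d L hy)
    _ hg.isOpen_support hgy
  refine lt_of_lt_of_le ((hg.isOpen_support.inter (isOpen_openBox d L)).measure_pos volume
    ⟨z, hz_supp, hz_open⟩) (measure_mono (Set.inter_subset_inter_right _ ?_))
  exact fun x hx i => Set.Ioo_subset_Ico_self (hx i)

lemma PeriodicOn.exists_mem_box_eq {d : ℕ} {L : ℝ} (hL : 0 < L)
    {m : EuclideanSpace ℝ (Fin d) → ℝ} (hm : PeriodicOn d L m) (z : EuclideanSpace ℝ (Fin d)) :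
    ∃ x ∈ box d L, m x = m z := by
  set v : EuclideanSpace ℝ (Fin d) :=
    ∑ i, ⌊z i / L⌋ • (L • EuclideanSpace.single i (1 : ℝ)) with hv
  have hperiod : Function.Periodic m v :=
    Finset.sum_induction _ (Function.Periodic m) (fun _ _ => Function.Periodic.add_period)
      (Function.periodic_with_period_zero m) fun i _ => Function.Periodic.zsmul (fun x => hm x i) _
  refine ⟨z - v, fun i => ?_, hperiod.sub_eq z⟩
  have hcoord : (z - v) i = z i - ⌊z i / L⌋ * L := by
    simp [hv, Pi.single_apply, mul_comm]
  rw [hcoord]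
  exact ⟨Int.sub_floor_div_mul_nonneg _ hL, Int.sub_floor_div_mul_lt _ hL⟩

lemma Fpot_sub_tangent (n s : ℝ) :
    Fpot s - (Fpot n + (n ^ 3 - n) * (s - n)) =
      (s - n) ^ 2 * ((s + n) ^ 2 - (2 - 2 * n ^ 2)) / 4 := by
  unfold Fpot
  ring

lemma two_sub_two_mul_sq_lt_sq_add {n s : ℝ} (hs : s < -n - √(2 - 2 * n ^ 2)) :
    2 - 2 * n ^ 2 < (s + n) ^ 2 := by
  have hpos : 0 < -(s + n) := by linarith [Real.sqrt_nonneg (2 - 2 * n ^ 2)]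
  simpa only [neg_sq] using (Real.sqrt_lt' hpos).1 (by linarith)

lemma tangent_le_Fpot {n s : ℝ} (hs : s < -n - √(2 - 2 * n ^ 2)) :
    Fpot n + (n ^ 3 - n) * (s - n) ≤ Fpot s := by
  have := Fpot_sub_tangent n s
  have := two_sub_two_mul_sq_lt_sq_add hs
  have : 0 ≤ (s - n) ^ 2 * ((s + n) ^ 2 - (2 - 2 * n ^ 2)) := by positivity
  linarith

lemma tangent_lt_Fpot {n s : ℝ} (hs : s < -n - √(2 - 2 * n ^ 2)) (hsn : s ≠ n) :
    Fpot n + (n ^ 3 - n) * (s - n) < Fpot s := by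
  have := Fpot_sub_tangent n s
  have := two_sub_two_mul_sq_lt_sq_add hs
  have : 0 < (s - n) ^ 2 := by positivity
  have : 0 < (s - n) ^ 2 * ((s + n) ^ 2 - (2 - 2 * n ^ 2)) := by positivity
  linarith

@[fun_prop]
lemma continuous_Fpot : Continuous Fpot := by
  unfold Fpot
  fun_prop

lemma Adm.setIntegral_affine {d : ℕ} {L n : ℝ} {m : EuclideanSpace ℝ (Fin d) → ℝ} (hL : 0 < L)
    (hm : Adm d L n m) (a b : ℝ) : ∫ x in box d L, (a + b * (m x - n)) = L ^ d * a := by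
  obtain ⟨hC1, -, hmean⟩ := hm
  have hint : ∫ x in box d L, m x = L ^ d * n := by
    rw [← hmean]
    field_simp
  have hm_int := hC1.continuous.integrableOn_box (L := L)
  have hconst_int : IntegrableOn (fun _ => a - b * n) (box d L) :=
    continuous_const.integrableOn_box
  simp_rw [mul_sub, add_sub, add_sub_right_comm]
  rw [integral_add hconst_int (hm_int.const_mul b), integral_const_mul, hint,
    setIntegral_box_const d hL.le]
  ring

lemma FE_nonneg (d : ℕ) (L : ℝ) (m : EuclideanSpace ℝ (Fin d) → ℝ) : 0 ≤ FE d L m :=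
  setIntegral_nonneg (measurableSet_box d L) fun _ _ => by unfold Fpot; positivity

lemma FE_const (d : ℕ) {L : ℝ} (hL : 0 ≤ L) (c : ℝ) : FE d L (fun _ => c) = L ^ d * Fpot c := by
  simp [FE, setIntegral_box_const d hL]

lemma adm_const (d : ℕ) {L : ℝ} (hL : 0 < L) (c : ℝ) : Adm d L c (fun _ => c) := by
  refine ⟨contDiff_const, fun _ _ => rfl, ?_⟩
  rw [setIntegral_box_const d hL.le]
  field_simp

lemma fL_le_FE {d : ℕ} {L n : ℝ} {m : EuclideanSpace ℝ (Fin d) → ℝ} (hm : Adm d L n m) :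
    fL d L n ≤ FE d L m :=
  csInf_le ⟨0, by rintro _ ⟨m', -, rfl⟩; exact FE_nonneg d L m'⟩ ⟨m, hm, rfl⟩

lemma setIntegral_Fpot_le_FE {d : ℕ} {L : ℝ} {m : EuclideanSpace ℝ (Fin d) → ℝ}
    (hm : ContDiff ℝ 1 m) : ∫ x in box d L, Fpot (m x) ≤ FE d L m := by
  have hgrad : Continuous fun x => (1 / 2 : ℝ) * ‖fderiv ℝ m x‖ ^ 2 := by
    have := hm.continuous_fderiv one_ne_zero
    fun_prop
  have hF : Continuous fun x => Fpot (m x) := by fun_prop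
  rw [FE, integral_add hgrad.integrableOn_box hF.integrableOn_box]
  exact le_add_of_nonneg_left (setIntegral_nonneg (measurableSet_box d L) fun _ _ => by positivity)

lemma Adm.FE_const_lt {d : ℕ} {L n : ℝ} {m : EuclideanSpace ℝ (Fin d) → ℝ} (hL : 0 < L)
    (hm : Adm d L n m) (hlt : ∀ x ∈ box d L, m x < -n - √(2 - 2 * n ^ 2))
    {y : EuclideanSpace ℝ (Fin d)} (hy : y ∈ box d L) (hmy : m y ≠ n) :
    FE d L (fun _ => n) < FE d L m := by
  rw [FE_const d hL.le]
  have hmc := hm.1.continuous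
  have hF : Continuous fun x => Fpot (m x) := by fun_prop
  have htangent : Continuous fun x => Fpot n + (n ^ 3 - n) * (m x - n) := by fun_prop
  have hgap : 0 < ∫ x in box d L, (Fpot (m x) - (Fpot n + (n ^ 3 - n) * (m x - n))) :=
    setIntegral_box_pos (hF.sub htangent)
      (fun x hx => sub_nonneg.2 (tangent_le_Fpot (hlt x hx))) hy
      (sub_ne_zero.2 (tangent_lt_Fpot (hlt y hy) hmy).ne')
  rw [integral_sub hF.integrableOn_box htangent.integrableOn_box,
    hm.setIntegral_affine hL] at hgap
  linarith [setIntegral_Fpot_le_FE (L := L) hm.1]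

theorem nonconstant_minimizer_max_lower_bound_general (d : ℕ) (L : ℝ) (hL : 0 < L)
    (n δ : ℝ) (hn : n = -1 + δ) (hδ0 : 0 < δ)
    (m : EuclideanSpace ℝ (Fin d) → ℝ) (hmin : IsMinimizer d L n m)
    (hnc : ¬ ∀ x y, m x = m y) :
    1 - δ - 2 * Real.sqrt δ * Real.sqrt (1 - δ/2) ≤ sSup (m '' box d L) := by
  obtain ⟨hadm, hFE⟩ := hmin
  have hthreshold : 1 - δ - 2 * √δ * √(1 - δ / 2) = -n - √(2 - 2 * n ^ 2) := by
    rw [mul_assoc, ← Real.sqrt_mul hδ0.le, hn,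
      show 2 - 2 * (-1 + δ) ^ 2 = 2 ^ 2 * (δ * (1 - δ / 2)) by ring,
      Real.sqrt_mul (sq_nonneg 2), Real.sqrt_sq zero_le_two]
    ring
  by_contra! hsup
  have hbdd : BddAbove (m '' box d L) :=
    ((isBounded_box d L).isCompact_closure.image hadm.1.continuous).bddAbove.mono
      (Set.image_mono subset_closure)
  have hlt : ∀ x ∈ box d L, m x < -n - √(2 - 2 * n ^ 2) := fun x hx =>
    hthreshold ▸ (le_csSup hbdd ⟨x, hx, rfl⟩).trans_lt hsup
  obtain ⟨y, hy, hmy⟩ : ∃ y ∈ box d L, m y ≠ n := by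
    by_contra! hconst
    refine hnc fun x z => ?_
    obtain ⟨x', hx', hx'_eq⟩ := hadm.2.1.exists_mem_box_eq hL x
    obtain ⟨z', hz', hz'_eq⟩ := hadm.2.1.exists_mem_box_eq hL z
    rw [← hx'_eq, ← hz'_eq, hconst x' hx', hconst z' hz']
  exact (fL_le_FE (adm_const d hL n)).not_gt (hFE ▸ hadm.FE_const_lt hL hlt hy hmy)

/-- Lemma 3.2: if `n = -1 + δ` with `0 < δ < 2` and `m` is a nonconstant minimizer for
`f_L(n)`, then `max m ≥ 1 - δ - 2√δ √(1 - δ/2)`. -/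
theorem nonconstant_minimizer_max_lower_bound (d : ℕ) (hd : 2 ≤ d) (L : ℝ) (hL : 0 < L)
    (n δ : ℝ) (hn : n = -1 + δ) (hδ0 : 0 < δ) (hδ2 : δ < 2)
    (m : EuclideanSpace ℝ (Fin d) → ℝ) (hmin : IsMinimizer d L n m)
    (hnc : ¬ ∀ x y, m x = m y) :
    1 - δ - 2 * Real.sqrt δ * Real.sqrt (1 - δ/2) ≤ sSup (m '' box d L) :=
  nonconstant_minimizer_max_lower_bound_general d L hL n δ hn hδ0 m hmin hnc
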